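/- arXiv:1706.00681 — 2 statements merged into one kernel-verified Lean document; each statement's English description precedes it below -/
import Mathlib

section
/- Under the prolate spheroidal parametrization, the gradient of the function x ↦ |x| + |x − e| at a point x with |x| > 0 and |x − e| > 0 has norm √(4τ²−cos²φ)·√(4τ²−1) / (2|x||x−e|), where cosh ρ = 2τ; equivalently, |x/|x| + (x−e)/|x−e|| = |2τx − |x|e| / (|x| |x−e|). -/
open Real

noncomputable def pt3 (a b c : ℝ) : EuclideanSpace ℝ (Fin 3) :=
  (EuclideanSpace.equiv (Fin 3) ℝ).symm ![a, b, c]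

/-- with `e = (1,0,0)`, `x ≠ 0`, `x ≠ e` and `2τ = |x| + |x−e|`, the gradient
of `y ↦ |y| + |y−e|` at `x` has norm `|2τx − |x|e| / (|x| |x−e|)`, i.e.
`|x/|x| + (x−e)/|x−e|| = |2τx − |x|e| / (|x| |x−e|)`. -/
theorem stmt7 (x : EuclideanSpace ℝ (Fin 3)) (hx : x ≠ 0) (hxe : x ≠ pt3 1 0 0)
    (τ : ℝ) (hτ : 2 * τ = ‖x‖ + ‖x - pt3 1 0 0‖) :
    ‖(‖x‖⁻¹) • x + (‖x - pt3 1 0 0‖⁻¹) • (x - pt3 1 0 0)‖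
      = ‖(2 * τ) • x - ‖x‖ • pt3 1 0 0‖ / (‖x‖ * ‖x - pt3 1 0 0‖) := by
  set e := pt3 1 0 0
  have ha : ‖x‖ ≠ 0 := norm_ne_zero_iff.mpr hx
  have hb : ‖x - e‖ ≠ 0 := norm_ne_zero_iff.mpr (sub_ne_zero.mpr hxe)
  have key : (2 * τ) • x - ‖x‖ • e
      = (‖x‖ * ‖x - e‖) • ((‖x‖⁻¹) • x + (‖x - e‖⁻¹) • (x - e)) := by
    rw [hτ, smul_add, smul_smul, smul_smul]
    have h1 : ‖x‖ * ‖x - e‖ * ‖x‖⁻¹ = ‖x - e‖ := by field_simp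
    have h2 : ‖x‖ * ‖x - e‖ * ‖x - e‖⁻¹ = ‖x‖ := by field_simp
    rw [h1, h2]
    module
  rw [key, norm_smul, Real.norm_of_nonneg (mul_nonneg (norm_nonneg _) (norm_nonneg _)),
    mul_comm]
  rw [mul_div_assoc, div_self (mul_ne_zero ha hb), mul_one]
end

section
/- Let q : ℝ³ → ℝ be continuous and nonnegative. If for every τ ∈ (1/2, T/2] the integral of q over the ellipsoid surface {|x−e|+|x| = 2τ} with respect to the weight 1/|2τx − |x|e| is zero, then q(x) = 0 for every x with |x| + |x−e| ≤ T (and |x|+|x−e| > 1). -/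
/-
Suppose `q x > 0` and put `s = ‖x‖ + ‖x - e‖ ∈ (1, T]`. The ellipsoid `{y | ‖y - e‖ + ‖y‖ = s}`
is compact and has finite area: by the focal polar equation `r = (s² - 1) / (2 (s - cos φ))`
it is a smooth image of a rectangle in spherical coordinates. The weight does not vanish on it,
so the integrand is continuous there, hence integrable, and a vanishing integral of a nonnegative
integrand forces it to vanish almost everywhere. But `q > 0` near `x`, and the ellipsoid meets
every ball around `x` in positive area: it is a level set of the convex function
`y ↦ ‖y - e‖ + ‖y‖`, which is smaller at the focus `0`, so the line through `0` and `x` crosses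
it strictly, and by the intermediate value theorem the projection of the ellipsoid near `x`
along this line covers an open piece of the orthogonal plane.
-/

open MeasureTheory

open Metric Set Module Filter Topology Real

theorem ContDiff.hausdorffMeasure_image_lt_top {E F : Type*}
    [NormedAddCommGroup E] [NormedSpace ℝ E] [FiniteDimensional ℝ E]
    [MeasurableSpace E] [BorelSpace E]
    [NormedAddCommGroup F] [NormedSpace ℝ F] [MeasurableSpace F] [BorelSpace F]
    {f : E → F} (hf : ContDiff ℝ 1 f) {s : Set E} (hs : IsCompact s) :
    μH[finrank ℝ E] (f '' s) < ⊤ := by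
  obtain ⟨K, hK⟩ := hf.locallyLipschitz.locallyLipschitzOn.exists_lipschitzOnWith_of_compact hs
  refine (hK.hausdorffMeasure_image_le (Nat.cast_nonneg _)).trans_lt ?_
  exact ENNReal.mul_lt_top (by simp) hs.measure_lt_top

section LevelSet

variable {V : Type*} [NormedAddCommGroup V] [InnerProductSpace ℝ V] [FiniteDimensional ℝ V]
  [MeasurableSpace V] [BorelSpace V]

theorem hausdorffMeasure_levelSet_inter_pos {n : ℕ} (hn : finrank ℝ V = n + 1)
    {f : V → ℝ} (hf : Continuous f) {U : Set V} (hU : IsOpen U) (hUc : Convex ℝ U)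
    {a b : V} (ha : a ∈ U) (hb : b ∈ U) {c : ℝ} (hfa : f a < c) (hfb : c < f b) :
    0 < μH[n] ({y | f y = c} ∩ U) := by
  have hab : b - a ≠ 0 := sub_ne_zero.2 fun h => by rw [h] at hfb; linarith
  set K := (ℝ ∙ (b - a))ᗮ
  have hK : finrank ℝ K = n := by
    have : Fact (finrank ℝ V = n + 1) := ⟨hn⟩
    exact Submodule.finrank_orthogonal_span_singleton hab
  set P := K.orthogonalProjectionOnto
  -- translations `k ⊥ b - a` for which the segment `[a + k, b + k]` still crosses `c` inside `U`
  set W : Set K := {k | f (a + k) < c} ∩ {k | c < f (b + k)} ∩ {k | a + k ∈ U} ∩ {k | b + k ∈ U}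
  have hW : IsOpen W := by
    have hcont : ∀ z : V, Continuous fun k : K => z + (k : V) := fun z => by fun_prop
    exact (((isOpen_lt (hf.comp (hcont a)) continuous_const).inter
      (isOpen_lt continuous_const (hf.comp (hcont b)))).inter
      (hU.preimage (hcont a))).inter (hU.preimage (hcont b))
  have hW0 : (0 : K) ∈ W := by simp [W, hfa, hfb, ha, hb]
  have hWP : (P a + ·) '' W ⊆ P '' ({y | f y = c} ∩ U) := by
    rintro _ ⟨k, ⟨⟨⟨hka, hkb⟩, hkaU⟩, hkbU⟩, rfl⟩
    have hseg : segment ℝ (a + k) (b + k) ⊆ U := hUc.segment_subset hkaU hkbU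
    obtain ⟨y, hy, hfy⟩ := (convex_segment (a + (k : V)) (b + k)).isPreconnected.intermediate_value
      (left_mem_segment ℝ _ _) (right_mem_segment ℝ _ _) hf.continuousOn ⟨hka.le, hkb.le⟩
    refine ⟨y, ⟨hfy, hseg hy⟩, ?_⟩
    rw [segment_eq_image'] at hy
    obtain ⟨t, -, rfl⟩ := hy
    have hv : P (b - a) = 0 :=
      Submodule.orthogonalProjectionOnto_orthogonalComplement_singleton_eq_zero _
    have hk : P k = k := Submodule.orthogonalProjectionOnto_mem_subspace_eq_self k
    simp only [map_add, map_smul, hk, show b + (k : V) - (a + k) = b - a by abel, hv, smul_zero,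
      add_zero]
  have himage : 0 < μH[n] ((P a + ·) '' W) := by
    rw [← hK]
    exact ((isOpenMap_add_left (P a)) W hW).measure_pos _ ⟨_, mem_image_of_mem _ hW0⟩
  have hle := P.lipschitz.hausdorffMeasure_image_le (Nat.cast_nonneg n) ({y | f y = c} ∩ U)
  refine pos_iff_ne_zero.2 fun h0 => ?_
  rw [h0, mul_zero] at hle
  exact himage.ne' (le_antisymm ((measure_mono hWP).trans hle) zero_le)

end LevelSet

theorem ConvexOn.exists_lt_lt_of_lt {E : Type*} [NormedAddCommGroup E] [NormedSpace ℝ E]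
    {g : E → ℝ} (hg : ConvexOn ℝ univ g) {p x : E} (hpx : g p < g x) {U : Set E} (hU : U ∈ 𝓝 x) :
    ∃ a ∈ U, ∃ b ∈ U, g a < g x ∧ g x < g b := by
  have hline : ∀ᶠ t in 𝓝 (0 : ℝ), x + t • (x - p) ∈ U := by
    refine (Continuous.tendsto (by fun_prop) 0).eventually ?_
    simpa using hU
  obtain ⟨ε, hε, hεU⟩ := Metric.eventually_nhds_iff.1 hline
  set δ := min (ε / 2) (1 / 2)
  have hδ : 0 < δ := by positivity
  have hδε : |δ| < ε := by rw [abs_of_pos hδ]; linarith [min_le_left (ε / 2) (1 / 2)]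
  have hδ1 : δ < 1 := by linarith [min_le_right (ε / 2) (1 / 2)]
  refine ⟨x + (-δ) • (x - p), hεU (by simpa [abs_neg] using hδε), x + δ • (x - p),
    hεU (by simpa using hδε), ?_, ?_⟩
  · have hseg : x + (-δ) • (x - p) ∈ openSegment ℝ p x :=
      ⟨δ, 1 - δ, hδ, by linarith, by ring, by module⟩
    by_contra! h
    exact (hg.lt_right_of_left_lt (mem_univ p) (mem_univ x) hseg (hpx.trans_le h)).not_ge h
  · have hseg : x ∈ openSegment ℝ p (x + δ • (x - p)) := by
      refine ⟨δ / (1 + δ), 1 / (1 + δ), by positivity, by positivity, by field_simp; ring, ?_⟩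
      match_scalars
      · field_simp; ring
      · field_simp
    exact hg.lt_right_of_left_lt (mem_univ p) (mem_univ _) hseg hpx

theorem isCompact_ellipsoid {V : Type*} [NormedAddCommGroup V] [ProperSpace V] (e : V) (s : ℝ) :
    IsCompact {y : V | ‖y - e‖ + ‖y‖ = s} := by
  refine isCompact_of_isClosed_isBounded (isClosed_eq (by fun_prop) continuous_const)
    ((isBounded_closedBall (x := (0 : V)) (r := s)).subset fun y (hy : _ = s) => ?_)
  rw [mem_closedBall_zero_iff]
  linarith [norm_nonneg (y - e)]

section Ellipsoid

variable {V : Type*} [NormedAddCommGroup V] [InnerProductSpace ℝ V]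

theorem convexOn_norm_sub_add_norm (e : V) : ConvexOn ℝ univ fun y : V => ‖y - e‖ + ‖y‖ := by
  have h := (convexOn_univ_dist e).add (convexOn_univ_dist (0 : V))
  simp only [dist_eq_norm, sub_zero] at h
  exact h

theorem smul_sub_norm_smul_ne_zero {e y : V} (he : ‖e‖ = 1) {s : ℝ} (hs : 1 < s)
    (hy : ‖y - e‖ + ‖y‖ = s) : s • y - ‖y‖ • e ≠ 0 := by
  intro h
  have hnorm := congrArg norm (sub_eq_zero.1 h)
  rw [norm_smul, norm_smul, he, Real.norm_of_nonneg (by linarith), norm_norm, mul_one] at hnorm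
  have hy0 : y = 0 := norm_eq_zero.1 (by nlinarith [norm_nonneg y])
  rw [hy0, zero_sub, norm_neg, he, norm_zero] at hy
  linarith

theorem ellipsoid_subset_image_sphere {e : V} (he : ‖e‖ = 1) {s : ℝ} (hs : 1 < s) :
    {y : V | ‖y - e‖ + ‖y‖ = s} ⊆
      (fun u => ((s ^ 2 - 1) / (2 * (s - inner ℝ u e))) • u) '' sphere 0 1 := by
  intro y (hy : ‖y - e‖ + ‖y‖ = s)
  have hy0 : ‖y‖ ≠ 0 := fun h0 => by
    rw [norm_eq_zero.1 h0, zero_sub, norm_neg, he, norm_zero] at hy; linarith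
  have hfocal : s ^ 2 - 1 = 2 * (s * ‖y‖ - inner ℝ y e) := by
    have := norm_sub_sq_real y e
    rw [show ‖y - e‖ = s - ‖y‖ by linarith, he] at this
    linarith
  refine ⟨‖y‖⁻¹ • y, by simp [norm_smul, hy0], ?_⟩
  have hs2 : s ^ 2 - 1 ≠ 0 := by nlinarith
  have hradius : (s ^ 2 - 1) / (2 * (s - inner ℝ (‖y‖⁻¹ • y) e)) = ‖y‖ := by
    rw [real_inner_smul_left, div_eq_iff]
    · field_simp; linarith
    · intro h0
      apply hs2
      rw [hfocal]
      field_simp at h0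
      linarith
  simp only [hradius, smul_smul, mul_inv_cancel₀ hy0, one_smul]

theorem hausdorffMeasure_ellipsoid_inter_ball_pos [FiniteDimensional ℝ V] [MeasurableSpace V]
    [BorelSpace V] {n : ℕ} (hn : finrank ℝ V = n + 1) {e x : V} {s r : ℝ} (he : ‖e‖ < s)
    (hx : ‖x - e‖ + ‖x‖ = s) (hr : 0 < r) :
    0 < μH[n] ({y : V | ‖y - e‖ + ‖y‖ = s} ∩ ball x r) := by
  have hfocus : ‖(0 : V) - e‖ + ‖(0 : V)‖ < ‖x - e‖ + ‖x‖ := by simpa [hx] using he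
  obtain ⟨a, ha, b, hb, hfa, hfb⟩ :=
    (convexOn_norm_sub_add_norm e).exists_lt_lt_of_lt hfocus (ball_mem_nhds x hr)
  rw [hx] at hfa hfb
  exact hausdorffMeasure_levelSet_inter_pos hn (by fun_prop) isOpen_ball (convex_ball x r)
    ha hb hfa hfb

end Ellipsoid

local notation "E₃" => EuclideanSpace ℝ (Fin 3)

noncomputable def sphericalPoint (p : ℝ × ℝ) : E₃ :=
  !₂[cos p.2, sin p.2 * cos p.1, sin p.2 * sin p.1]

theorem contDiff_sphericalPoint : ContDiff ℝ 1 sphericalPoint := by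
  refine PiLp.contDiff_toLp.comp (contDiff_pi.2 fun i => ?_)
  fin_cases i <;> simp <;> fun_prop

theorem sphere_subset_image_sphericalPoint :
    sphere (0 : E₃) 1 ⊆ sphericalPoint '' (Icc (-π) π ×ˢ Icc 0 π) := by
  intro u hu
  have hsq : u 0 ^ 2 + u 1 ^ 2 + u 2 ^ 2 = 1 := by
    have := EuclideanSpace.real_norm_sq_eq u
    simp_all [Fin.sum_univ_three]
  set z : ℂ := ⟨u 1, u 2⟩
  have hz : ‖z‖ = sin (arccos (u 0)) := by
    rw [sin_arccos, Complex.norm_def, Complex.normSq_mk]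
    congr 1; linarith
  have hu0 : -1 ≤ u 0 ∧ u 0 ≤ 1 := ⟨by nlinarith, by nlinarith⟩
  refine ⟨(Complex.arg z, arccos (u 0)),
    ⟨⟨(Complex.neg_pi_lt_arg z).le, Complex.arg_le_pi z⟩, arccos_nonneg _, arccos_le_pi _⟩, ?_⟩
  ext i
  fin_cases i
  · simp [sphericalPoint, cos_arccos hu0.1 hu0.2]
  · simp [sphericalPoint, ← hz, Complex.norm_mul_cos_arg, z]
  · simp [sphericalPoint, ← hz, Complex.norm_mul_sin_arg, z]

theorem pt3_one_zero_zero : pt3 1 0 0 = EuclideanSpace.single 0 1 := by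
  ext i
  fin_cases i <;> rfl

theorem hausdorffMeasure_ellipsoid_lt_top {s : ℝ} (hs : 1 < s) :
    μH[2] {y : E₃ | ‖y - EuclideanSpace.single 0 1‖ + ‖y‖ = s} < ⊤ := by
  set e : E₃ := EuclideanSpace.single 0 1
  have he : ‖e‖ = 1 := by simp [e]
  have hinner (p : ℝ × ℝ) : inner ℝ (sphericalPoint p) e = cos p.2 := by
    simp [sphericalPoint, e, EuclideanSpace.inner_single_right]
  have hsmooth : ContDiff ℝ 1 fun p =>
      ((s ^ 2 - 1) / (2 * (s - inner ℝ (sphericalPoint p) e))) • sphericalPoint p := by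
    have hden : ContDiff ℝ 1 fun p : ℝ × ℝ => 2 * (s - cos p.2) := by fun_prop
    simp only [hinner]
    exact (contDiff_const.div hden fun p => by nlinarith [cos_le_one p.2]).smul
      contDiff_sphericalPoint
  have hcover := (ellipsoid_subset_image_sphere he hs).trans
    ((image_mono sphere_subset_image_sphericalPoint).trans (image_image _ _ _).subset)
  have hfinite := hsmooth.hausdorffMeasure_image_lt_top
    (isCompact_Icc.prod isCompact_Icc : IsCompact (Icc (-π) π ×ˢ Icc 0 π))
  rw [show finrank ℝ (ℝ × ℝ) = 2 by simp] at hfinite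
  exact (measure_mono hcover).trans_lt (by exact_mod_cast hfinite)

theorem stmt10_general (T : ℝ) (q : EuclideanSpace ℝ (Fin 3) → ℝ)
    (hq : Continuous q) (hqnn : ∀ x, 0 ≤ q x)
    (hsurf : ∀ τ ∈ Set.Ioc (1 / 2 : ℝ) (T / 2),
      (∫ x in {x : EuclideanSpace ℝ (Fin 3) | ‖x - pt3 1 0 0‖ + ‖x‖ = 2 * τ},
        q x / ‖(2 * τ) • x - ‖x‖ • pt3 1 0 0‖ ∂(μH[2])) = 0) :
    ∀ x : EuclideanSpace ℝ (Fin 3),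
      ‖x‖ + ‖x - pt3 1 0 0‖ ≤ T → 1 < ‖x‖ + ‖x - pt3 1 0 0‖ → q x = 0 := by
  intro x hxT hx1
  rw [pt3_one_zero_zero] at *
  set e : E₃ := EuclideanSpace.single 0 1
  have he : ‖e‖ = 1 := by simp [e]
  set s := ‖x - e‖ + ‖x‖
  set E := {y : E₃ | ‖y - e‖ + ‖y‖ = s}
  set g := fun y : E₃ => q y / ‖s • y - ‖y‖ • e‖
  have hs1 : 1 < s := by linarith
  have hzero : ∫ y in E, g y ∂μH[2] = 0 := by
    have htwo : 2 * (s / 2) = s := by ring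
    simpa only [htwo] using hsurf (s / 2) ⟨by linarith, by linarith⟩
  have hint : IntegrableOn g E μH[2] :=
    (hq.continuousOn.div (by fun_prop) fun y hy =>
      norm_ne_zero_iff.2 (smul_sub_norm_smul_ne_zero he hs1 hy)).integrableOn_of_subset_isCompact
      (isCompact_ellipsoid e s) (isCompact_ellipsoid e s).measurableSet Subset.rfl
      (hausdorffMeasure_ellipsoid_lt_top hs1).ne
  by_contra hqx
  obtain ⟨r, hr, hball⟩ := Metric.isOpen_iff.1 (isOpen_lt continuous_const hq) x
    ((hqnn x).lt_of_ne' hqx)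
  have hpos : 0 < μH[2] (E ∩ ball x r) := by
    exact_mod_cast hausdorffMeasure_ellipsoid_inter_ball_pos (n := 2) (by simp) (he.trans_lt hs1)
      rfl hr
  have hsupp : E ∩ ball x r ⊆ Function.support g ∩ E := fun y ⟨hyE, hyB⟩ =>
    ⟨(div_pos (hball hyB) (norm_pos_iff.2 (smul_sub_norm_smul_ne_zero he hs1 hyE))).ne', hyE⟩
  have hg : 0 ≤ᵐ[μH[2].restrict E] g := ae_of_all _ fun y => div_nonneg (hqnn y) (norm_nonneg _)
  exact ((setIntegral_pos_iff_support_of_nonneg_ae hg hint).2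
    (hpos.trans_le (measure_mono hsupp))).ne' hzero

/-- continuous nonnegative `q` with vanishing weighted surface integrals over
all ellipsoids `|x−e|+|x| = 2τ`, `τ ∈ (1/2, T/2]`, vanishes on
`{x : 1 < |x|+|x−e| ≤ T}`. -/
theorem stmt10 (T : ℝ) (hT : 1 < T) (q : EuclideanSpace ℝ (Fin 3) → ℝ)
    (hq : Continuous q) (hqnn : ∀ x, 0 ≤ q x)
    (hsurf : ∀ τ ∈ Set.Ioc (1 / 2 : ℝ) (T / 2),
      (∫ x in {x : EuclideanSpace ℝ (Fin 3) | ‖x - pt3 1 0 0‖ + ‖x‖ = 2 * τ},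
        q x / ‖(2 * τ) • x - ‖x‖ • pt3 1 0 0‖ ∂(μH[2])) = 0) :
    ∀ x : EuclideanSpace ℝ (Fin 3),
      ‖x‖ + ‖x - pt3 1 0 0‖ ≤ T → 1 < ‖x‖ + ‖x - pt3 1 0 0‖ → q x = 0 :=
  stmt10_general T q hq hqnn hsurf
end
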